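/- For every l ≥ 2, neither ∏_{i=1}^{l} P_i − 1 nor ∏_{i=1}^{l} P_i + 1 is the square of a prime number; that is, there is no prime p with p² = ∏_{i=1}^{l} P_i − 1 or p² = ∏_{i=1}^{l} P_i + 1. -/

import Mathlib

/-
Every primorial from the second on is 6 times a product of odd primes, hence ≡ 6 (mod 12).
So the two neighbours are ≡ 5 and ≡ 7 (mod 12), while squares are ≡ 0, 1, 4 or 9 (mod 12):
neither neighbour is a square at all, let alone the square of a prime.
-/

/-- `P i` is the `i`-th prime number (1-indexed): `P 1 = 2`, `P 2 = 3`, `P 3 = 5`, ... -/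
noncomputable def P (i : ℕ) : ℕ := Nat.nth Nat.Prime (i - 1)

/-- The `k`-th primorial, `∏_{i=1}^{k} P_i`. -/
noncomputable def primor (k : ℕ) : ℕ := ∏ i ∈ Finset.Icc 1 k, P i

theorem Nat.sq_mod_twelve (n : ℕ) :
    n ^ 2 % 12 = 0 ∨ n ^ 2 % 12 = 1 ∨ n ^ 2 % 12 = 4 ∨ n ^ 2 % 12 = 9 := by
  have key : ∀ r < 12, r ^ 2 % 12 = 0 ∨ r ^ 2 % 12 = 1 ∨ r ^ 2 % 12 = 4 ∨ r ^ 2 % 12 = 9 := by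
    decide
  rw [Nat.pow_mod]
  exact key _ (Nat.mod_lt n (by norm_num))

theorem P_prime (i : ℕ) : (P i).Prime :=
  Nat.prime_nth_prime _

theorem P_odd {i : ℕ} (hi : 2 ≤ i) : Odd (P i) := by
  refine (P_prime i).odd_of_ne_two (ne_of_gt ?_)
  calc 2 = Nat.nth Nat.Prime 0 := Nat.nth_prime_zero_eq_two.symm
    _ < P i := Nat.nth_strictMono Nat.infinite_setOfPred_prime (by omega)

theorem primor_succ (k : ℕ) : primor (k + 1) = primor k * P (k + 1) :=
  Finset.prod_Icc_succ_top (by omega) _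

theorem primor_two : primor 2 = 6 := by
  rw [primor_succ, primor_succ]
  simp [primor, P]

theorem primor_mod_twelve {l : ℕ} (hl : 2 ≤ l) : primor l % 12 = 6 := by
  induction l, hl using Nat.le_induction with
  | base => rw [primor_two]
  | succ k hk ih =>
    obtain ⟨m, hm⟩ := P_odd (i := k + 1) (by omega)
    rw [primor_succ, Nat.mul_mod, ih, hm]
    omega

/-- For every `l ≥ 2`, neither `∏_{i=1}^l P_i - 1` nor
`∏_{i=1}^l P_i + 1` is the square of a prime. -/
theorem primorial_pm_one_not_prime_square (l : ℕ) (hl : 2 ≤ l) :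
    ¬ ∃ p : ℕ, Nat.Prime p ∧ (p ^ 2 = primor l - 1 ∨ p ^ 2 = primor l + 1) := by
  rintro ⟨p, -, hp⟩
  have hprimor := primor_mod_twelve hl
  have hsq := Nat.sq_mod_twelve p
  omega
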